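/- Let k ≥ 1 and let (x_i, y_i, z_i), i = 1, …, k, be triples of variables from a set X; let t, f, c_1, …, c_{k+1} be pairwise distinct additional variables not belonging to X. For each i let δ_i^1 be the equality-term with literals {x_i, ¬y_i, ¬z_i, t, ¬f} and equality (c_i, c_{i+1}); let δ_i^2 have literals {¬x_i, y_i, ¬z_i, t, ¬f} and equality (c_i, c_{i+1}); let δ_i^3 have literals {¬x_i, ¬y_i, z_i, t, ¬f} and equality (c_i, c_{i+1}). Let Δ = {δ_i^j : 1 ≤ i ≤ k, 1 ≤ j ≤ 3} and let α be the equality-term with literals {t, ¬f} and equality (c_1, c_{k+1}). Then there exists an assignment σ : X → Bool such that for every i exactly one of σ(x_i), σ(y_i), σ(z_i) equals true, if and only if there exists a consistent subset Φ ⊆ Δ with Φ ⊨ α. (This is the correctness of the reduction from Pos-1-In-3-SAT used to prove para-NP-hardness of p-ARG.) -/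

import Mathlib

/-- An equality-term over variables `W`: a finite set of literals
(`Sum.inl w` positive, `Sum.inr w` negative) together with a finite set of
equalities between variables. -/
abbrev EqTerm (W : Type) := Finset (W ⊕ W) × Finset (W × W)

/-- An assignment satisfies a literal. -/
def satLit {W : Type} (σ : W → Bool) : W ⊕ W → Prop
  | Sum.inl w => σ w = true
  | Sum.inr w => σ w = false

/-- An assignment satisfies an equality-term if it satisfies every literal and
every equality of it. -/
def satEqTerm {W : Type} (σ : W → Bool) (φ : EqTerm W) : Prop :=
  (∀ l ∈ φ.1, satLit σ l) ∧ (∀ p ∈ φ.2, σ p.1 = σ p.2)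

/-- A set of equality-terms is consistent if some assignment satisfies all members. -/
def ConsistentE {W : Type} (Φ : Set (EqTerm W)) : Prop := ∃ σ, ∀ φ ∈ Φ, satEqTerm σ φ

/-- `Φ ⊨ α`: every assignment satisfying all members of `Φ` satisfies `α`. -/
def EntailsE {W : Type} (Φ : Set (EqTerm W)) (α : EqTerm W) : Prop :=
  ∀ σ, (∀ φ ∈ Φ, satEqTerm σ φ) → satEqTerm σ α

/-- The variable type of the reduction: the original variables `X` together
with the fresh, pairwise distinct variables `t, f` (the type `Fin 2`) and
`c_1, …, c_{k+1}` (the type `Fin (k+1)`). -/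
abbrev RedVar (X : Type) (k : ℕ) := X ⊕ (Fin 2 ⊕ Fin (k + 1))

/-- The variable `t`. -/
def tv (X : Type) (k : ℕ) : RedVar X k := Sum.inr (Sum.inl 0)

/-- The variable `f`. -/
def fv (X : Type) (k : ℕ) : RedVar X k := Sum.inr (Sum.inl 1)

/-- The variable `c_{i+1}` for `i : Fin (k+1)` (so `c_1, …, c_{k+1}`). -/
def cv (X : Type) (k : ℕ) (i : Fin (k + 1)) : RedVar X k := Sum.inr (Sum.inr i)

/-- `δ_i^1`: literals `{x_i, ¬y_i, ¬z_i, t, ¬f}` and equality `(c_i, c_{i+1})`. -/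
def delta1 {X : Type} [DecidableEq X] {k : ℕ} (x y z : Fin k → X) (i : Fin k) :
    EqTerm (RedVar X k) :=
  ({Sum.inl (Sum.inl (x i)), Sum.inr (Sum.inl (y i)), Sum.inr (Sum.inl (z i)),
    Sum.inl (tv X k), Sum.inr (fv X k)},
   {(cv X k i.castSucc, cv X k i.succ)})

/-- `δ_i^2`: literals `{¬x_i, y_i, ¬z_i, t, ¬f}` and equality `(c_i, c_{i+1})`. -/
def delta2 {X : Type} [DecidableEq X] {k : ℕ} (x y z : Fin k → X) (i : Fin k) :
    EqTerm (RedVar X k) :=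
  ({Sum.inr (Sum.inl (x i)), Sum.inl (Sum.inl (y i)), Sum.inr (Sum.inl (z i)),
    Sum.inl (tv X k), Sum.inr (fv X k)},
   {(cv X k i.castSucc, cv X k i.succ)})

/-- `δ_i^3`: literals `{¬x_i, ¬y_i, z_i, t, ¬f}` and equality `(c_i, c_{i+1})`. -/
def delta3 {X : Type} [DecidableEq X] {k : ℕ} (x y z : Fin k → X) (i : Fin k) :
    EqTerm (RedVar X k) :=
  ({Sum.inr (Sum.inl (x i)), Sum.inr (Sum.inl (y i)), Sum.inl (Sum.inl (z i)),
    Sum.inl (tv X k), Sum.inr (fv X k)},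
   {(cv X k i.castSucc, cv X k i.succ)})

/-- The knowledge-base `Δ = {δ_i^j : 1 ≤ i ≤ k, 1 ≤ j ≤ 3}`. -/
def redDelta {X : Type} [DecidableEq X] {k : ℕ} (x y z : Fin k → X) :
    Set (EqTerm (RedVar X k)) :=
  {φ | ∃ i, φ = delta1 x y z i ∨ φ = delta2 x y z i ∨ φ = delta3 x y z i}

/-- The claim `α`: literals `{t, ¬f}` and equality `(c_1, c_{k+1})`. -/
def redAlpha (X : Type) [DecidableEq X] (k : ℕ) : EqTerm (RedVar X k) :=
  ({Sum.inl (tv X k), Sum.inr (fv X k)}, {(cv X k 0, cv X k (Fin.last k))})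

/-!
A consistent `Φ ⊆ Δ` entailing `α` must contain some `δ_i^j` for every `i`: otherwise the
chain of equalities `c_1 = c_2 = ⋯ = c_{k+1}` has a missing link at `i`, and cutting the chain
there (`c_j` true for `j ≤ i`, false beyond) turns a model of `Φ` into one violating `α`. The
literals of the `δ_i^j` in `Φ` then force exactly one of `x_i, y_i, z_i` to be true. Conversely,
a 1-in-3 assignment selects one `δ_i^j` per `i`; these are jointly satisfiable and their
equalities chain `c_1` to `c_{k+1}`, while `t, ¬f` come from any one of them since `k ≥ 1`.
-/

namespace Fin

theorem apply_zero_eq_apply_last_of_chain {α : Type*} {k : ℕ} (f : Fin (k + 1) → α)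
    (h : ∀ i : Fin k, f i.castSucc = f i.succ) : f 0 = f (Fin.last k) := by
  suffices ∀ j : Fin (k + 1), f 0 = f j from this _
  intro j
  induction j using Fin.induction with
  | zero => rfl
  | succ i ih => exact ih.trans (h i)

theorem exists_chain_broken_at {k : ℕ} (i : Fin k) :
    ∃ f : Fin (k + 1) → Bool, (∀ j, j ≠ i → f j.castSucc = f j.succ) ∧ f 0 ≠ f (Fin.last k) := by
  refine ⟨fun m => decide (m ≤ i.castSucc), fun j hj => ?_, ?_⟩
  · have : (j : ℕ) ≠ i := Fin.val_ne_of_ne hj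
    simp only [decide_eq_decide, Fin.le_def, Fin.val_castSucc, Fin.val_succ]
    omega
  · simp [Fin.le_def]

end Fin

def IsOneInThree (a b c : Bool) : Prop :=
  (a = true ∧ b = false ∧ c = false) ∨ (a = false ∧ b = true ∧ c = false) ∨
    (a = false ∧ b = false ∧ c = true)

section Reduction

variable {X : Type} [DecidableEq X] {k : ℕ} (x y z : Fin k → X)

theorem satEqTerm_delta1_iff (σ : RedVar X k → Bool) (i : Fin k) :
    satEqTerm σ (delta1 x y z i) ↔
      (σ (.inl (x i)) = true ∧ σ (.inl (y i)) = false ∧ σ (.inl (z i)) = false) ∧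
      σ (tv X k) = true ∧ σ (fv X k) = false ∧ σ (cv X k i.castSucc) = σ (cv X k i.succ) := by
  simp [delta1, satEqTerm, satLit, and_assoc]

theorem satEqTerm_delta2_iff (σ : RedVar X k → Bool) (i : Fin k) :
    satEqTerm σ (delta2 x y z i) ↔
      (σ (.inl (x i)) = false ∧ σ (.inl (y i)) = true ∧ σ (.inl (z i)) = false) ∧
      σ (tv X k) = true ∧ σ (fv X k) = false ∧ σ (cv X k i.castSucc) = σ (cv X k i.succ) := by
  simp [delta2, satEqTerm, satLit, and_assoc]

theorem satEqTerm_delta3_iff (σ : RedVar X k → Bool) (i : Fin k) :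
    satEqTerm σ (delta3 x y z i) ↔
      (σ (.inl (x i)) = false ∧ σ (.inl (y i)) = false ∧ σ (.inl (z i)) = true) ∧
      σ (tv X k) = true ∧ σ (fv X k) = false ∧ σ (cv X k i.castSucc) = σ (cv X k i.succ) := by
  simp [delta3, satEqTerm, satLit, and_assoc]

theorem satEqTerm_redAlpha_iff (σ : RedVar X k → Bool) :
    satEqTerm σ (redAlpha X k) ↔
      σ (tv X k) = true ∧ σ (fv X k) = false ∧ σ (cv X k 0) = σ (cv X k (Fin.last k)) := by
  simp [redAlpha, satEqTerm, satLit, and_assoc]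

def HasDeltaAt (Φ : Set (EqTerm (RedVar X k))) (i : Fin k) : Prop :=
  delta1 x y z i ∈ Φ ∨ delta2 x y z i ∈ Φ ∨ delta3 x y z i ∈ Φ

variable {x y z}

theorem HasDeltaAt.isOneInThree {Φ : Set (EqTerm (RedVar X k))} {σ : RedVar X k → Bool}
    {i : Fin k} (h : HasDeltaAt x y z Φ i) (hσ : ∀ φ ∈ Φ, satEqTerm σ φ) :
    IsOneInThree (σ (.inl (x i))) (σ (.inl (y i))) (σ (.inl (z i))) := by
  rcases h with h | h | h
  · exact .inl ((satEqTerm_delta1_iff x y z σ i).1 (hσ _ h)).1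
  · exact .inr (.inl ((satEqTerm_delta2_iff x y z σ i).1 (hσ _ h)).1)
  · exact .inr (.inr ((satEqTerm_delta3_iff x y z σ i).1 (hσ _ h)).1)

theorem HasDeltaAt.link {Φ : Set (EqTerm (RedVar X k))} {σ : RedVar X k → Bool}
    {i : Fin k} (h : HasDeltaAt x y z Φ i) (hσ : ∀ φ ∈ Φ, satEqTerm σ φ) :
    σ (tv X k) = true ∧ σ (fv X k) = false ∧ σ (cv X k i.castSucc) = σ (cv X k i.succ) := by
  rcases h with h | h | h
  · exact ((satEqTerm_delta1_iff x y z σ i).1 (hσ _ h)).2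
  · exact ((satEqTerm_delta2_iff x y z σ i).1 (hσ _ h)).2
  · exact ((satEqTerm_delta3_iff x y z σ i).1 (hσ _ h)).2

theorem entailsE_redAlpha_of_hasDeltaAt (hk : 0 < k) {Φ : Set (EqTerm (RedVar X k))}
    (h : ∀ i, HasDeltaAt x y z Φ i) : EntailsE Φ (redAlpha X k) := by
  intro σ hσ
  obtain ⟨ht, hf, -⟩ := (h ⟨0, hk⟩).link hσ
  exact (satEqTerm_redAlpha_iff σ).2 ⟨ht, hf,
    Fin.apply_zero_eq_apply_last_of_chain (σ ∘ cv X k) fun i => ((h i).link hσ).2.2⟩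

theorem hasDeltaAt_of_entailsE_redAlpha {Φ : Set (EqTerm (RedVar X k))}
    {σ : RedVar X k → Bool} (hΦ : Φ ⊆ redDelta x y z) (hσ : ∀ φ ∈ Φ, satEqTerm σ φ)
    (hent : EntailsE Φ (redAlpha X k)) (i : Fin k) : HasDeltaAt x y z Φ i := by
  by_contra hi
  obtain ⟨cut, hcut, hbroken⟩ := Fin.exists_chain_broken_at i
  let τ : RedVar X k → Bool := Sum.elim (σ ∘ .inl) (Sum.elim (σ ∘ .inr ∘ .inl) cut)
  have hτ : ∀ φ ∈ Φ, satEqTerm τ φ := by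
    intro φ hφ
    obtain ⟨j, hj⟩ := hΦ hφ
    have hji : j ≠ i := by
      rintro rfl
      exact hi (by rcases hj with rfl | rfl | rfl <;> simp [HasDeltaAt, hφ])
    have hσφ := hσ φ hφ
    rcases hj with rfl | rfl | rfl <;>
      simp only [satEqTerm_delta1_iff, satEqTerm_delta2_iff, satEqTerm_delta3_iff] at hσφ ⊢ <;>
      exact ⟨hσφ.1, hσφ.2.1, hσφ.2.2.1, hcut j hji⟩
  exact hbroken ((satEqTerm_redAlpha_iff τ).1 (hent τ hτ)).2.2

variable (x y z)

def selectedDeltas (s : X → Bool) : Set (EqTerm (RedVar X k)) :=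
  {φ | ∃ i, (s (x i) = true ∧ φ = delta1 x y z i) ∨ (s (y i) = true ∧ φ = delta2 x y z i) ∨
    (s (z i) = true ∧ φ = delta3 x y z i)}

theorem selectedDeltas_subset (s : X → Bool) : selectedDeltas x y z s ⊆ redDelta x y z := by
  rintro φ ⟨i, hφ⟩
  exact ⟨i, by tauto⟩

variable {x y z}

theorem hasDeltaAt_selectedDeltas {s : X → Bool} {i : Fin k}
    (hs : IsOneInThree (s (x i)) (s (y i)) (s (z i))) :
    HasDeltaAt x y z (selectedDeltas x y z s) i := by
  rcases hs with ⟨h, -⟩ | ⟨-, h, -⟩ | ⟨-, -, h⟩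
  · exact .inl ⟨i, .inl ⟨h, rfl⟩⟩
  · exact .inr (.inl ⟨i, .inr (.inl ⟨h, rfl⟩)⟩)
  · exact .inr (.inr ⟨i, .inr (.inr ⟨h, rfl⟩)⟩)

theorem consistentE_selectedDeltas {s : X → Bool}
    (hs : ∀ i, IsOneInThree (s (x i)) (s (y i)) (s (z i))) :
    ConsistentE (selectedDeltas x y z s) := by
  refine ⟨Sum.elim s (Sum.elim ![true, false] fun _ => true), ?_⟩
  rintro φ ⟨i, hφ⟩
  rcases hs i with ⟨hx, hy, hz⟩ | ⟨hx, hy, hz⟩ | ⟨hx, hy, hz⟩ <;>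
    rcases hφ with ⟨h, rfl⟩ | ⟨h, rfl⟩ | ⟨h, rfl⟩ <;>
    simp_all [satEqTerm_delta1_iff, satEqTerm_delta2_iff, satEqTerm_delta3_iff, tv, fv, cv]

end Reduction

/-- Correctness of the reduction from Pos-1-In-3-SAT: the instance has an
assignment setting exactly one variable per triple to true iff there is a
consistent subset of `Δ` entailing `α`. -/
theorem stmt_12 {X : Type} [DecidableEq X] (k : ℕ) (hk : 1 ≤ k)
    (x y z : Fin k → X) :
    (∃ σ : X → Bool, ∀ i : Fin k,
        (σ (x i) = true ∧ σ (y i) = false ∧ σ (z i) = false) ∨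
        (σ (x i) = false ∧ σ (y i) = true ∧ σ (z i) = false) ∨
        (σ (x i) = false ∧ σ (y i) = false ∧ σ (z i) = true)) ↔
    (∃ Φ : Set (EqTerm (RedVar X k)), Φ ⊆ redDelta x y z ∧
        ConsistentE Φ ∧ EntailsE Φ (redAlpha X k)) := by
  constructor
  · rintro ⟨s, hs⟩
    exact ⟨selectedDeltas x y z s, selectedDeltas_subset x y z s, consistentE_selectedDeltas hs,
      entailsE_redAlpha_of_hasDeltaAt hk fun i => hasDeltaAt_selectedDeltas (hs i)⟩
  · rintro ⟨Φ, hΦ, ⟨σ, hσ⟩, hent⟩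
    exact ⟨σ ∘ .inl, fun i => (hasDeltaAt_of_entailsE_redAlpha hΦ hσ hent i).isOneInThree hσ⟩
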